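/- arXiv:1211.2291 — 2 statements merged into one kernel-verified Lean document; each statement's English description precedes it below -/
import Mathlib

section
/- In the binary case M = 2 with R(1,λ) = Σ_a λ_a D(q_1^a||q_2^a) and R(2,λ) = Σ_a λ_a D(q_2^a||q_1^a): if some single action a* simultaneously maximizes both a ↦ D(q_1^a||q_2^a) and a ↦ D(q_2^a||q_1^a) over A, then max_{λ∈Λ(A)} R̄(λ) = R̄*, where R̄(λ) is the harmonic mean of R(1,λ) and R(2,λ) and R̄* is the harmonic mean of max_a D(q_1^a||q_2^a) and max_a D(q_2^a||q_1^a). Conversely, if the argmax sets of the two maps are disjoint, then max_{λ∈Λ(A)} R̄(λ) < R̄*. -/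
/-!
A mixed action `λ` earns the rates `R(1, λ)` and `R(2, λ)` as `λ`-averages of the divergences, so
each is at most the corresponding maximal divergence, with equality only if `λ` is supported on
the argmax set of that divergence. The harmonic mean is increasing in each argument and strictly
so, hence `R̄(λ) ≤ R̄*` always; a common maximizer attains `R̄*` with a point mass, while
disjoint argmax sets force one of the two rates to fall strictly short of its maximum.
-/

open MeasureTheory Finset

section HarmonicMean

variable {𝕜 : Type*} [Field 𝕜] [LinearOrder 𝕜] [IsStrictOrderedRing 𝕜] {x y X Y : 𝕜}

def harmonicMean (x y : 𝕜) : 𝕜 := 2 / (x⁻¹ + y⁻¹)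

theorem harmonicMean_le_harmonicMean (hx : 0 < x) (hy : 0 < y) (hX : x ≤ X) (hY : y ≤ Y) :
    harmonicMean x y ≤ harmonicMean X Y := by
  have hXY : 0 < X⁻¹ + Y⁻¹ := by
    have := hx.trans_le hX; have := hy.trans_le hY; positivity
  exact div_le_div_of_nonneg_left zero_le_two hXY
    (add_le_add (inv_anti₀ hx hX) (inv_anti₀ hy hY))

theorem harmonicMean_lt_harmonicMean (hx : 0 < x) (hy : 0 < y) (hX : x ≤ X) (hY : y ≤ Y)
    (hlt : x < X ∨ y < Y) : harmonicMean x y < harmonicMean X Y := by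
  have hXY : 0 < X⁻¹ + Y⁻¹ := by
    have := hx.trans_le hX; have := hy.trans_le hY; positivity
  refine div_lt_div_of_pos_left zero_lt_two hXY ?_
  rcases hlt with hlt | hlt
  · exact add_lt_add_of_lt_of_le (inv_strictAnti₀ hx hlt) (inv_anti₀ hy hY)
  · exact add_lt_add_of_le_of_lt (inv_anti₀ hx hX) (inv_strictAnti₀ hy hlt)

end HarmonicMean

section StdSimplex

variable {𝕜 ι : Type*} [Field 𝕜] [LinearOrder 𝕜] [IsStrictOrderedRing 𝕜] [Fintype ι]
  {l d : ι → 𝕜} {M : 𝕜}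

theorem exists_pos_of_mem_stdSimplex (hl : l ∈ stdSimplex 𝕜 ι) : ∃ i, 0 < l i := by
  by_contra! h
  exact (hl.2 ▸ sum_nonpos fun i _ ↦ h i : (1 : 𝕜) ≤ 0).not_gt one_pos

theorem sum_mul_pos_of_mem_stdSimplex (hl : l ∈ stdSimplex 𝕜 ι) (hd : ∀ i, 0 < d i) :
    0 < ∑ i, l i * d i := by
  obtain ⟨i, hi⟩ := exists_pos_of_mem_stdSimplex hl
  exact sum_pos' (fun j _ ↦ mul_nonneg (hl.1 j) (hd j).le) ⟨i, mem_univ i, mul_pos hi (hd i)⟩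

theorem sum_mul_le_of_mem_stdSimplex (hl : l ∈ stdSimplex 𝕜 ι) (hd : ∀ i, d i ≤ M) :
    ∑ i, l i * d i ≤ M :=
  calc ∑ i, l i * d i ≤ ∑ i, l i * M :=
        sum_le_sum fun i _ ↦ mul_le_mul_of_nonneg_left (hd i) (hl.1 i)
    _ = M := by rw [← sum_mul, hl.2, one_mul]

theorem eq_of_sum_mul_eq_of_mem_stdSimplex (hl : l ∈ stdSimplex 𝕜 ι) (hd : ∀ i, d i ≤ M)
    (h : ∑ i, l i * d i = M) {i : ι} (hi : 0 < l i) : d i = M := by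
  have hM : ∑ j, l j * M = M := by rw [← sum_mul, hl.2, one_mul]
  rw [← hM, sum_eq_sum_iff_of_le fun j _ ↦ mul_le_mul_of_nonneg_left (hd j) (hl.1 j)] at h
  exact mul_left_cancel₀ hi.ne' (h i (mem_univ i))

theorem exists_eq_and_eq_of_sum_mul_eq_of_mem_stdSimplex {e : ι → 𝕜} {N : 𝕜}
    (hl : l ∈ stdSimplex 𝕜 ι) (hd : ∀ i, d i ≤ M) (he : ∀ i, e i ≤ N)
    (hdM : ∑ i, l i * d i = M) (heN : ∑ i, l i * e i = N) : ∃ i, d i = M ∧ e i = N := by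
  obtain ⟨i, hi⟩ := exists_pos_of_mem_stdSimplex hl
  exact ⟨i, eq_of_sum_mul_eq_of_mem_stdSimplex hl hd hdM hi,
    eq_of_sum_mul_eq_of_mem_stdSimplex hl he heN hi⟩

end StdSimplex

theorem binary_adaptivity_gain_characterization_general
    {A : Type*} [Fintype A]
    (hA : (Finset.univ : Finset A).Nonempty)
    (d1 d2 : A → ℝ)
    (hd1pos : ∀ a, 0 < d1 a) (hd2pos : ∀ a, 0 < d2 a)
    (R1 R2 : (A → ℝ) → ℝ)
    (hR1 : ∀ l, R1 l = ∑ a : A, l a * d1 a)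
    (hR2 : ∀ l, R2 l = ∑ a : A, l a * d2 a)
    (Rbar : (A → ℝ) → ℝ)
    (hRbar : ∀ l, Rbar l = 2 / ((R1 l)⁻¹ + (R2 l)⁻¹))
    (RbarStar : ℝ)
    (hRbarStar : RbarStar =
      2 / ((Finset.univ.sup' hA d1)⁻¹ + (Finset.univ.sup' hA d2)⁻¹)) :
    ((∃ astar : A, (∀ a, d1 a ≤ d1 astar) ∧ (∀ a, d2 a ≤ d2 astar)) →
        IsGreatest {x : ℝ | ∃ l ∈ stdSimplex ℝ A, Rbar l = x} RbarStar) ∧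
    ({a | ∀ b, d1 b ≤ d1 a} ∩ {a | ∀ b, d2 b ≤ d2 a} = ∅ →
        ∀ l ∈ stdSimplex ℝ A, Rbar l < RbarStar) := by
  classical
  set D1 := univ.sup' hA d1
  set D2 := univ.sup' hA d2
  have hle1 (a : A) : d1 a ≤ D1 := le_sup' d1 (mem_univ a)
  have hle2 (a : A) : d2 a ≤ D2 := le_sup' d2 (mem_univ a)
  have hrates (l : A → ℝ) (hl : l ∈ stdSimplex ℝ A) :
      0 < R1 l ∧ 0 < R2 l ∧ R1 l ≤ D1 ∧ R2 l ≤ D2 := by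
    rw [hR1, hR2]
    exact ⟨sum_mul_pos_of_mem_stdSimplex hl hd1pos, sum_mul_pos_of_mem_stdSimplex hl hd2pos,
      sum_mul_le_of_mem_stdSimplex hl hle1, sum_mul_le_of_mem_stdSimplex hl hle2⟩
  refine ⟨fun ⟨astar, h1, h2⟩ ↦ ⟨?_, ?_⟩, fun hdisj l hl ↦ ?_⟩
  · have hD1 : D1 = d1 astar := le_antisymm (sup'_le hA d1 fun a _ ↦ h1 a) (hle1 astar)
    have hD2 : D2 = d2 astar := le_antisymm (sup'_le hA d2 fun a _ ↦ h2 a) (hle2 astar)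
    refine ⟨Pi.single astar 1, single_mem_stdSimplex ℝ astar, ?_⟩
    simp [hRbar, hR1, hR2, hRbarStar, hD1, hD2, Pi.single_apply]
  · rintro _ ⟨l, hl, rfl⟩
    obtain ⟨p1, p2, b1, b2⟩ := hrates l hl
    rw [hRbar, hRbarStar]
    exact harmonicMean_le_harmonicMean p1 p2 b1 b2
  · obtain ⟨p1, p2, b1, b2⟩ := hrates l hl
    have hshort : R1 l < D1 ∨ R2 l < D2 := by
      by_contra! h
      obtain ⟨a, e1, e2⟩ := exists_eq_and_eq_of_sum_mul_eq_of_mem_stdSimplex hl hle1 hle2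
        ((hR1 l).symm.trans (b1.antisymm h.1)) ((hR2 l).symm.trans (b2.antisymm h.2))
      exact Set.eq_empty_iff_forall_notMem.1 hdisj a ⟨fun b ↦ e1 ▸ hle1 b, fun b ↦ e2 ▸ hle2 b⟩
    rw [hRbar, hRbarStar]
    exact harmonicMean_lt_harmonicMean p1 p2 b1 b2 hshort

/-- Active binary hypothesis testing: if some single action simultaneously
maximizes both directed KL divergences, the best non-adaptive harmonic-mean
reliability `max_λ R̄(λ)` equals `R̄*`; if the two argmax sets are disjoint,
then `R̄(λ) < R̄*` for every `λ`, i.e. there is a strict adaptivity gain. -/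
theorem binary_adaptivity_gain_characterization
    {A : Type*} [Fintype A] [Nonempty A]
    (hA : (Finset.univ : Finset A).Nonempty)
    {Z : Type*} [MeasurableSpace Z] (μ : Measure Z)
    (q1 q2 : A → Z → ℝ)
    (hq10 : ∀ a z, 0 ≤ q1 a z) (hq20 : ∀ a z, 0 ≤ q2 a z)
    (hq11 : ∀ a, ∫ z, q1 a z ∂μ = 1) (hq21 : ∀ a, ∫ z, q2 a z ∂μ = 1)
    (d1 d2 : A → ℝ)
    (hd1 : ∀ a, d1 a = ∫ z, q1 a z * Real.log (q1 a z / q2 a z) ∂μ)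
    (hd2 : ∀ a, d2 a = ∫ z, q2 a z * Real.log (q2 a z / q1 a z) ∂μ)
    (hd1pos : ∀ a, 0 < d1 a) (hd2pos : ∀ a, 0 < d2 a)
    (R1 R2 : (A → ℝ) → ℝ)
    (hR1 : ∀ l, R1 l = ∑ a : A, l a * d1 a)
    (hR2 : ∀ l, R2 l = ∑ a : A, l a * d2 a)
    (Rbar : (A → ℝ) → ℝ)
    (hRbar : ∀ l, Rbar l = 2 / ((R1 l)⁻¹ + (R2 l)⁻¹))
    (RbarStar : ℝ)
    (hRbarStar : RbarStar =
      2 / ((Finset.univ.sup' hA d1)⁻¹ + (Finset.univ.sup' hA d2)⁻¹)) :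
    ((∃ astar : A, (∀ a, d1 a ≤ d1 astar) ∧ (∀ a, d2 a ≤ d2 astar)) →
        IsGreatest {x : ℝ | ∃ l ∈ stdSimplex ℝ A, Rbar l = x} RbarStar) ∧
    ({a | ∀ b, d1 b ≤ d1 a} ∩ {a | ∀ b, d2 b ≤ d2 a} = ∅ →
        ∀ l ∈ stdSimplex ℝ A, Rbar l < RbarStar) :=
  binary_adaptivity_gain_characterization_general hA d1 d2 hd1pos hd2pos R1 R2 hR1 hR2 Rbar hRbar
    RbarStar hRbarStar
end

section
/- Fix λ ∈ Λ(A) and i ∈ Ω, let R = min_{j≠i} Σ_a λ_a D(q_i^a||q_j^a) > 0, and suppose per-step log-likelihood increments are independent and bounded: |log(q_i^{A(t)}/q_j^{A(t)})| ≤ log ξ. Define τ_i = min{n : min_{j≠i} ρ_i(n)/ρ_j(n) ≥ c} for a threshold c > 1, and T_i = log c - min_{k≠i} log(ρ_i/ρ_k). Then for any ι > 0 and all n > (T_i/R)(1+ι): P(τ_i > n | θ=i) ≤ (M-1)·exp(-n·(2ι²/(1+ι)²)·(R/(2 log ξ))²). -/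
/-!
On the event `τᵢ > n` some alternative `j` still has `log (ρᵢ(n)/ρⱼ(n)) < log c`, i.e. its
increment sum `Sⱼ(n) = ∑_{t<n} Wⱼ(t)` is at most `Tᵢ`. Each `Sⱼ(n)` is a sum of `n` independent
increments in `[-log ξ, log ξ]` with mean at least `R`, and `n > (Tᵢ/R)(1+ι)` puts `Tᵢ` at least
`nRι/(1+ι)` below `E Sⱼ(n)`. Hoeffding's inequality bounds each such lower deviation by
`exp (-n (2ι²/(1+ι)²) (R/(2 log ξ))²)`, and a union bound over the `M - 1` alternatives concludes.
-/

open MeasureTheory ProbabilityTheory Finset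

section Hoeffding

variable {Ω : Type*} [MeasurableSpace Ω] {μ : Measure Ω} [IsProbabilityMeasure μ]

lemma hasSubgaussianMGF_integral_sub_of_abs_le {X : Ω → ℝ} (hX : AEMeasurable X μ) {B : ℝ}
    (hB : ∀ᵐ ω ∂μ, |X ω| ≤ B) :
    HasSubgaussianMGF (fun ω ↦ μ[X] - X ω) (‖B‖₊ ^ 2) μ := by
  have hIcc : ∀ᵐ ω ∂μ, X ω ∈ Set.Icc (-B) B := by
    filter_upwards [hB] with ω h using abs_le.mp h
  have hwidth : ‖B - -B‖₊ / 2 = ‖B‖₊ := by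
    rw [sub_neg_eq_add, ← two_mul, nnnorm_mul]
    simp
  have h := (hasSubgaussianMGF_of_mem_Icc hX hIcc).neg
  rw [hwidth] at h
  exact h.congr (ae_of_all _ fun ω ↦ by simp)

lemma measureReal_sum_range_le_sub_le {X : ℕ → Ω → ℝ} (h_indep : iIndepFun X μ)
    (hmeas : ∀ t, AEMeasurable (X t) μ) {B : ℝ} (hB : ∀ t, ∀ᵐ ω ∂μ, |X t ω| ≤ B)
    (n : ℕ) {ε : ℝ} (hε : 0 ≤ ε) :
    μ.real {ω | ∑ t ∈ range n, X t ω ≤ ∑ t ∈ range n, μ[X t] - ε} ≤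
      Real.exp (-ε ^ 2 / (2 * n * B ^ 2)) := by
  have h_indep' : iIndepFun (fun t ω ↦ μ[X t] - X t ω) μ :=
    h_indep.comp (fun t x ↦ (∫ ω, X t ω ∂μ) - x) (fun t ↦ by fun_prop)
  have h := HasSubgaussianMGF.measure_sum_range_ge_le_of_iIndepFun (n := n) h_indep'
    (fun t _ ↦ hasSubgaussianMGF_integral_sub_of_abs_le (hmeas t) (hB t)) hε
  have hset : {ω | ∑ t ∈ range n, X t ω ≤ ∑ t ∈ range n, μ[X t] - ε} =
      {ω | ε ≤ ∑ t ∈ range n, (μ[X t] - X t ω)} := by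
    ext ω
    simp only [Set.mem_ofPred_eq, sum_sub_distrib]
    constructor <;> intro h <;> linarith
  rw [hset]
  simpa using h

lemma measureReal_sum_range_le_le_of_drift {X : ℕ → Ω → ℝ} (h_indep : iIndepFun X μ)
    (hmeas : ∀ t, AEMeasurable (X t) μ) {B : ℝ} (hB : ∀ t, ∀ᵐ ω ∂μ, |X t ω| ≤ B)
    {R ι T : ℝ} {n : ℕ} (hmean : ∀ t, R ≤ μ[X t]) (hR : 0 ≤ R) (hι : 0 < ι)
    (hT : T * (1 + ι) < n * R) :
    μ.real {ω | ∑ t ∈ range n, X t ω ≤ T} ≤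
      Real.exp (-(n : ℝ) * (2 * ι ^ 2 / (1 + ι) ^ 2) * (R / (2 * B)) ^ 2) := by
  set δ := n * R * ι / (1 + ι) with hδ_def
  have hδ : 0 ≤ δ := by positivity
  have hmargin : δ ≤ ∑ t ∈ range n, μ[X t] - T := by
    have hdrift : (n : ℝ) * R ≤ ∑ t ∈ range n, μ[X t] := by
      simpa using sum_le_sum fun t (_ : t ∈ range n) ↦ hmean t
    have hδ_eq : δ = n * R - n * R / (1 + ι) := by rw [hδ_def]; field_simp; ring
    have hT' : T < n * R / (1 + ι) := by rw [lt_div_iff₀ (by linarith)]; linarith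
    linarith
  have h := measureReal_sum_range_le_sub_le h_indep hmeas hB n (hδ.trans hmargin)
  rw [sub_sub_cancel] at h
  refine h.trans (Real.exp_le_exp.mpr ?_)
  calc -(∑ t ∈ range n, μ[X t] - T) ^ 2 / (2 * n * B ^ 2)
      ≤ -δ ^ 2 / (2 * n * B ^ 2) := by gcongr
    _ = -(n : ℝ) * (2 * ι ^ 2 / (1 + ι) ^ 2) * (R / (2 * B)) ^ 2 := by
        -- for `n = 0` or `B = 0` both sides are `0`, by the convention `x / 0 = 0`
        rcases eq_or_ne (n : ℝ) 0 with hn | hn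
        · simp [δ, hn]
        rcases eq_or_ne B 0 with hB0 | hB0
        · simp [hB0]
        have hι₁ : 1 + ι ≠ 0 := by linarith
        rw [hδ_def]
        field_simp

end Hoeffding

lemma measureReal_biUnion_le_card_mul {α β : Type*} [MeasurableSpace α] {μ : Measure α}
    {s : Finset β} {E : β → Set α} {b : ℝ} (h : ∀ j ∈ s, μ.real (E j) ≤ b) :
    μ.real (⋃ j ∈ s, E j) ≤ #s * b := by
  simpa using (measureReal_biUnion_finset_le s E).trans (sum_le_card_nsmul s _ b h)

theorem stopping_time_tail_bound_general
    (M : ℕ) (i : Fin M)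
    (herase : (Finset.univ.erase i : Finset (Fin M)).Nonempty)
    {Ω : Type*} [MeasurableSpace Ω] (μ : Measure Ω) [IsProbabilityMeasure μ]
    {A : Type*} [Fintype A]
    -- pairwise KL divergences from hypothesis i
    (dK : A → Fin M → ℝ)
    -- randomized rule and its worst-case reliability R = R(i, λ)
    (l : A → ℝ)
    (R : ℝ)
    (hR : R = (Finset.univ.erase i).inf' herase (fun j => ∑ a : A, l a * dK a j))
    (hRpos : 0 < R)
    -- prior
    (ρ : Fin M → ℝ)
    -- bounded likelihood ratios
    (ξ : ℝ)
    -- per-step log-likelihood increments for each alternative j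
    (W : Fin M → ℕ → Ω → ℝ)
    (hWmeas : ∀ j t, Measurable (W j t))
    (hindep : ∀ j, iIndepFun (W j) μ)
    (hWbdd : ∀ j t ω, |W j t ω| ≤ Real.log ξ)
    (hWmean : ∀ j ∈ Finset.univ.erase i, ∀ t, μ[W j t] = ∑ a : A, l a * dK a j)
    -- the log posterior ratio processes
    (LR : Fin M → ℕ → Ω → ℝ)
    (hLR : ∀ j n ω, LR j n ω =
      Real.log (ρ i / ρ j) + ∑ t ∈ Finset.range n, W j t ω)
    -- threshold and the constant Tᵢ
    (c : ℝ)
    (Ti : ℝ)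
    (hTi : Ti = Real.log c -
      (Finset.univ.erase i).inf' herase (fun k => Real.log (ρ i / ρ k))) :
    ∀ ι : ℝ, 0 < ι → ∀ n : ℕ, Ti / R * (1 + ι) < n →
      (μ {ω | ∀ m ≤ n, ∃ j, j ≠ i ∧ LR j m ω < Real.log c}).toReal ≤
        ((M : ℝ) - 1) *
          Real.exp (-(n : ℝ) * (2 * ι ^ 2 / (1 + ι) ^ 2) *
            (R / (2 * Real.log ξ)) ^ 2) := by
  intro ι hι n hn
  have hTn : Ti * (1 + ι) < n * R := by
    rwa [div_mul_eq_mul_div, div_lt_iff₀ hRpos] at hn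
  have hsub : {ω | ∀ m ≤ n, ∃ j, j ≠ i ∧ LR j m ω < Real.log c} ⊆
      ⋃ j ∈ univ.erase i, {ω | ∑ t ∈ range n, W j t ω ≤ Ti} := by
    intro ω hω
    obtain ⟨j, hji, hj⟩ := hω n le_rfl
    have hj_mem : j ∈ univ.erase i := mem_erase.mpr ⟨hji, mem_univ j⟩
    have hprior := inf'_le (fun k ↦ Real.log (ρ i / ρ k)) hj_mem
    rw [hLR] at hj
    exact Set.mem_biUnion hj_mem (by rw [Set.mem_ofPred_eq, hTi]; linarith)
  have htail : ∀ j ∈ univ.erase i, μ.real {ω | ∑ t ∈ range n, W j t ω ≤ Ti} ≤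
      Real.exp (-(n : ℝ) * (2 * ι ^ 2 / (1 + ι) ^ 2) * (R / (2 * Real.log ξ)) ^ 2) :=
    fun j hj ↦ measureReal_sum_range_le_le_of_drift (hindep j)
      (fun t ↦ (hWmeas j t).aemeasurable) (fun t ↦ ae_of_all _ (hWbdd j t))
      (fun t ↦ by rw [hWmean j hj t, hR]; exact inf'_le _ hj) hRpos.le hι hTn
  have hcard : (#(univ.erase i) : ℝ) = M - 1 := by
    rw [card_erase_of_mem (mem_univ i), card_univ, Fintype.card_fin,
      Nat.cast_sub (Nat.one_le_of_lt i.isLt), Nat.cast_one]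
  calc (μ {ω | ∀ m ≤ n, ∃ j, j ≠ i ∧ LR j m ω < Real.log c}).toReal
      ≤ μ.real (⋃ j ∈ univ.erase i, {ω | ∑ t ∈ range n, W j t ω ≤ Ti}) :=
        measureReal_mono hsub (measure_ne_top μ _)
    _ ≤ ((M : ℝ) - 1) *
          Real.exp (-(n : ℝ) * (2 * ι ^ 2 / (1 + ι) ^ 2) * (R / (2 * Real.log ξ)) ^ 2) := by
        rw [← hcard]
        exact measureReal_biUnion_le_card_mul htail

/-- Lemma (expdecay): under the true hypothesis `i` (here `μ` is the
conditional law given `θ = i`), a fixed randomized rule drives all log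
posterior ratios `log(ρᵢ(n)/ρⱼ(n))` up at rate at least
`R = min_{j≠i} Σ_a λ_a D(qᵢᵃ‖qⱼᵃ)`, so the stopping time
`τᵢ = min{n : minⱼ ρᵢ(n)/ρⱼ(n) ≥ c}` has exponentially decaying tail:
for `n > (Tᵢ/R)(1+ι)`,
`P(τᵢ > n) ≤ (M-1) exp(-n (2ι²/(1+ι)²) (R/(2 log ξ))²)`. -/
theorem stopping_time_tail_bound
    (M : ℕ) (hM : 2 ≤ M) (i : Fin M)
    (herase : (Finset.univ.erase i : Finset (Fin M)).Nonempty)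
    {Ω : Type*} [MeasurableSpace Ω] (μ : Measure Ω) [IsProbabilityMeasure μ]
    {A : Type*} [Fintype A]
    {Zs : Type*} [MeasurableSpace Zs] (ν : Measure Zs)
    (q : A → Fin M → Zs → ℝ)
    (hq0 : ∀ a k z, 0 ≤ q a k z) (hq1 : ∀ a k, ∫ z, q a k z ∂ν = 1)
    -- pairwise KL divergences from hypothesis i
    (dK : A → Fin M → ℝ)
    (hdK : ∀ a j, dK a j = ∫ z, q a i z * Real.log (q a i z / q a j z) ∂ν)
    -- randomized rule and its worst-case reliability R = R(i, λ)
    (l : A → ℝ) (hl : l ∈ stdSimplex ℝ A)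
    (R : ℝ)
    (hR : R = (Finset.univ.erase i).inf' herase (fun j => ∑ a : A, l a * dK a j))
    (hRpos : 0 < R)
    -- prior
    (ρ : Fin M → ℝ) (hρ : ∀ k, 0 < ρ k)
    -- bounded likelihood ratios
    (ξ : ℝ) (hξ : 1 < ξ)
    -- per-step log-likelihood increments for each alternative j
    (W : Fin M → ℕ → Ω → ℝ)
    (hWmeas : ∀ j t, Measurable (W j t))
    (hindep : ∀ j, iIndepFun (W j) μ)
    (hWbdd : ∀ j t ω, |W j t ω| ≤ Real.log ξ)
    (hWint : ∀ j t, Integrable (W j t) μ)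
    (hWmean : ∀ j ∈ Finset.univ.erase i, ∀ t, μ[W j t] = ∑ a : A, l a * dK a j)
    -- the log posterior ratio processes
    (LR : Fin M → ℕ → Ω → ℝ)
    (hLR : ∀ j n ω, LR j n ω =
      Real.log (ρ i / ρ j) + ∑ t ∈ Finset.range n, W j t ω)
    -- threshold and the constant Tᵢ
    (c : ℝ) (hc : 1 < c)
    (Ti : ℝ)
    (hTi : Ti = Real.log c -
      (Finset.univ.erase i).inf' herase (fun k => Real.log (ρ i / ρ k))) :
    ∀ ι : ℝ, 0 < ι → ∀ n : ℕ, Ti / R * (1 + ι) < n →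
      (μ {ω | ∀ m ≤ n, ∃ j, j ≠ i ∧ LR j m ω < Real.log c}).toReal ≤
        ((M : ℝ) - 1) *
          Real.exp (-(n : ℝ) * (2 * ι ^ 2 / (1 + ι) ^ 2) *
            (R / (2 * Real.log ξ)) ^ 2) :=
  stopping_time_tail_bound_general M i herase μ dK l R hR hRpos ρ ξ W hWmeas hindep hWbdd hWmean LR
    hLR c Ti hTi
end
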